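/- Let f: 𝒳 → Δ be a semistable degeneration of projective surfaces with smooth total space 𝒳, such that H¹(X_t, ℚ) = 0 for the general fiber and H₃(X₀, ℤ) is torsion-free for the central fiber. Then the restriction map H²(𝒳, ℤ) → H²(X_t, ℤ)^{π₁(Δ*)} onto the monodromy-invariant classes is surjective (LICT_ℤ holds in degree 2). -/
import Mathlib


/-- LICT_ℤ in degree 2 for a semistable degeneration `f : 𝒳 → Δ` of projective surfaces
with smooth total space, assuming `H¹(X_t, ℚ) = 0` and `H₃(X₀, ℤ)` torsion-free.

Homological-algebra formulation (groups named after the geometry):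
`H2X = H²(𝒳,ℤ)`, `H2Xs = H²(𝒳*,ℤ)`, `H2Xt = H²(X_t,ℤ)`,
`H3pair = H³(𝒳,𝒳*;ℤ) ≅ H₃(𝒳,ℤ) ≅ H₃(X₀,ℤ)` (Lefschetz duality, excision, retraction);
`r` is restriction, `s` restriction to the fiber, `TmI = T − I` the monodromy difference,
`δ` the connecting map of the pair `(𝒳, 𝒳*)`.  The hypotheses encode:
the Wang sequence `H²(𝒳*) → H²(X_t) → H²(X_t)` exact over ℤ; exactness of the pair
sequence at `H²(𝒳*)`; the Clemens–Schmid exactness over ℚ (an invariant class has a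
multiple lifting to `H²(𝒳)`); `ker s` torsion (from `H¹(X_t,ℚ) = 0` via the Wang
sequence); and `H₃(X₀,ℤ)` torsion-free.  Conclusion: every monodromy-invariant class in
`H²(X_t,ℤ)` is the restriction of a class in `H²(𝒳,ℤ)`. -/
theorem stmt12 (H2X H2Xs H2Xt H3pair : Type)
    [AddCommGroup H2X] [AddCommGroup H2Xs] [AddCommGroup H2Xt] [AddCommGroup H3pair]
    (r : H2X →+ H2Xs) (s : H2Xs →+ H2Xt) (TmI : H2Xt →+ H2Xt) (δ : H2Xs →+ H3pair)
    (hWang : ∀ α : H2Xt, TmI α = 0 → ∃ b : H2Xs, s b = α)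
    (hpairExact : ∀ b : H2Xs, δ b = 0 ↔ b ∈ Set.range r)
    (hCSQ : ∀ α : H2Xt, TmI α = 0 → ∃ (m : ℕ) (a : H2X), 0 < m ∧ s (r a) = (m : ℤ) • α)
    (hH1 : ∀ b : H2Xs, s b = 0 → ∃ k : ℕ, 0 < k ∧ (k : ℤ) • b = 0)
    (hH3 : ∀ (d : H3pair) (k : ℕ), 0 < k → (k : ℤ) • d = 0 → d = 0) :
    ∀ α : H2Xt, TmI α = 0 → ∃ a : H2X, s (r a) = α := by
  intro α hα
  obtain ⟨b, hb⟩ := hWang α hα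
  obtain ⟨m, a, hm, ha⟩ := hCSQ α hα
  have hs0 : s ((m : ℤ) • b - r a) = 0 := by
    simp [map_sub, map_zsmul, hb, ha]
  obtain ⟨k, hk, hkb⟩ := hH1 _ hs0
  have hδra : δ (r a) = 0 := (hpairExact (r a)).mpr ⟨a, rfl⟩
  have hδ : ((k * m : ℕ) : ℤ) • δ b = 0 := by
    have := congrArg δ hkb
    simp only [map_zsmul, map_sub, map_zero, hδra, smul_zero, sub_zero, smul_smul] at this
    push_cast at this ⊢
    simpa [smul_smul] using this
  have hδb : δ b = 0 := hH3 _ _ (Nat.mul_pos hk hm) hδ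
  obtain ⟨a', ha'⟩ := (hpairExact b).mp hδb
  exact ⟨a', ha' ▸ hb⟩
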